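/- The function d([K],[M]) = log ρ(K,M) + log ρ(M,K), where ρ(K,M) = inf{Vol(K')/Vol(M) : K' affinely equivalent to K, K' ⊇ M}, is a metric on the set of affine equivalence classes of convex bodies in ℝ^d: it is well-defined (invariant under replacing K, M by affine images), nonnegative, symmetric, zero iff [K]=[M], and satisfies the triangle inequality. -/

import Mathlib

open MeasureTheory

/-- `ρ(K,M)`: the infimum of `Vol(K')/Vol(M)` over affine images `K'` of `K`
containing `M`. -/
noncomputable def macbeathRho {d : ℕ} (K M : Set (EuclideanSpace ℝ (Fin d))) : ℝ :=
  sInf {t | ∃ f : EuclideanSpace ℝ (Fin d) ≃ᵃ[ℝ] EuclideanSpace ℝ (Fin d),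
    M ⊆ f '' K ∧ t = (volume (f '' K)).toReal / (volume M).toReal}

/-- Macbeath's distance `d([K],[M]) = log ρ(K,M) + log ρ(M,K)` between (classes of)
convex bodies. -/
noncomputable def macbeathDist {d : ℕ} (K M : Set (EuclideanSpace ℝ (Fin d))) : ℝ :=
  Real.log (macbeathRho K M) + Real.log (macbeathRho M K)

/-!
Invariance and symmetry are formal, and the triangle inequality follows from
`ρ(K,N) ≤ ρ(K,M) ρ(M,N)` by composing affine maps, once the infimum defining `ρ` is known to be
attained. Attainment is a compactness argument: the inverses of a minimizing sequence of affine
maps send `M` into the bounded set `K`, so their linear parts are bounded and a subsequence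
converges to an affine map `g₀` with `g₀(M) ⊆ K` and `|det g₀| ρ(K,M) = Vol K / Vol M > 0`.
If `ρ(K,M) = 1`, the minimizer gives an affine image of `M` inside `K` of full volume; it is closed,
and a closed subset of full measure of a convex body is the whole body, since the rest would
contain a nonempty open set.
-/

open Filter Topology Metric Set Bornology

theorem eq_of_isClosed_of_subset_of_measureReal_eq {X : Type*} [TopologicalSpace X]
    [MeasurableSpace X] [OpensMeasurableSpace X] (μ : Measure X) [μ.IsOpenPosMeasure]
    {A K : Set X} (hA : IsClosed A) (hAK : A ⊆ K) (hK : K ⊆ closure (interior K))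
    (hμ : μ.real A = μ.real K) (hμK : μ K ≠ ⊤) : A = K := by
  refine hAK.antisymm fun x hx => by_contra fun hxA => ?_
  obtain ⟨y, hyA, hyK⟩ : (Aᶜ ∩ interior K).Nonempty :=
    mem_closure_iff.1 (hK hx) _ hA.isOpen_compl hxA
  have hpos : 0 < μ (Aᶜ ∩ interior K) :=
    (hA.isOpen_compl.inter isOpen_interior).measure_pos μ ⟨y, hyA, hyK⟩
  have hzero : μ (K \ A) = 0 := by
    rw [← measureReal_eq_zero_iff (measure_ne_top_of_subset sdiff_subset hμK),
      measureReal_sdiff hAK hA.measurableSet hμK, hμ, sub_self]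
  exact hpos.ne' (measure_mono_null
    (show Aᶜ ∩ interior K ⊆ K \ A from fun z hz => ⟨interior_subset hz.2, hz.1⟩) hzero)

theorem IsCompact.measureReal_pos {X : Type*} [TopologicalSpace X] [MeasurableSpace X]
    {μ : Measure X} [μ.IsOpenPosMeasure] [IsFiniteMeasureOnCompacts μ] {s : Set X}
    (hs : IsCompact s) (hs' : (interior s).Nonempty) : 0 < μ.real s :=
  ENNReal.toReal_pos (μ.measure_pos_of_nonempty_interior hs').ne' hs.measure_ne_top

section AffineMaps

variable {E : Type*} [NormedAddCommGroup E] [NormedSpace ℝ E]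

theorem MeasureTheory.Measure.addHaar_image_affineMap [MeasurableSpace E] [BorelSpace E]
    [FiniteDimensional ℝ E] (μ : Measure E) [μ.IsAddHaarMeasure] (f : E →ᵃ[ℝ] E) (s : Set E) :
    μ (f '' s) = ENNReal.ofReal |LinearMap.det f.linear| * μ s := by
  have hf : ⇑f = (f 0 +ᵥ ·) ∘ f.linear := by
    ext x
    simpa [add_comm] using congrFun f.decomp x
  rw [hf, image_comp, image_vadd, measure_vadd, Measure.addHaar_image_linearMap]

theorem MeasureTheory.Measure.addHaar_real_image_affineMap [MeasurableSpace E] [BorelSpace E]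
    [FiniteDimensional ℝ E] (μ : Measure E) [μ.IsAddHaarMeasure] (f : E →ᵃ[ℝ] E) (s : Set E) :
    μ.real (f '' s) = |LinearMap.det f.linear| * μ.real s := by
  rw [measureReal_def, μ.addHaar_image_affineMap, ENNReal.toReal_mul,
    ENNReal.toReal_ofReal (abs_nonneg _), measureReal_def]

theorem AffineEquiv.abs_det_linear_pos [FiniteDimensional ℝ E] (e : E ≃ᵃ[ℝ] E) :
    0 < |LinearMap.det (e : E →ᵃ[ℝ] E).linear| :=
  abs_pos.2 e.linear.isUnit_det'.ne_zero

theorem MeasureTheory.Measure.addHaar_real_image_affineEquiv [MeasurableSpace E] [BorelSpace E]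
    [FiniteDimensional ℝ E] (μ : Measure E) [μ.IsAddHaarMeasure] (e : E ≃ᵃ[ℝ] E) (s : Set E) :
    μ.real (e '' s) = |LinearMap.det (e : E →ᵃ[ℝ] E).linear| * μ.real s := by
  simpa using μ.addHaar_real_image_affineMap (e : E →ᵃ[ℝ] E) s

theorem MeasureTheory.Measure.addHaar_real_image_div_addHaar_real_image [MeasurableSpace E]
    [BorelSpace E] [FiniteDimensional ℝ E] (μ : Measure E) [μ.IsAddHaarMeasure]
    (e : E ≃ᵃ[ℝ] E) (A B : Set E) : μ.real (e '' A) / μ.real (e '' B) = μ.real A / μ.real B := by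
  rw [μ.addHaar_real_image_affineEquiv, μ.addHaar_real_image_affineEquiv,
    mul_div_mul_left _ _ e.abs_det_linear_pos.ne']

theorem ContinuousLinearMap.opNorm_le_div_of_norm_le {F : Type*} [NormedAddCommGroup F]
    [NormedSpace ℝ F] (f : E →L[ℝ] F) {r D : ℝ} (hr : 0 < r)
    (hf : ∀ v, ‖v‖ ≤ r → ‖f v‖ ≤ D) : ‖f‖ ≤ D / r := by
  have hD : 0 ≤ D := (norm_nonneg _).trans (hf 0 (by simpa using hr.le))
  refine f.opNorm_le_of_unit_norm (by positivity) fun v hv => ?_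
  have h := hf (r • v) (by simp [norm_smul, hv, abs_of_pos hr])
  rw [map_smul, norm_smul, Real.norm_eq_abs, abs_of_pos hr] at h
  rw [le_div_iff₀ hr]
  linarith

theorem AffineMap.exists_subseq_tendsto_of_mapsTo [FiniteDimensional ℝ E] {M K : Set E}
    (hM : (interior M).Nonempty) (hK : IsBounded K) (g : ℕ → E →ᵃ[ℝ] E)
    (hg : ∀ n, MapsTo (g n) M K) :
    ∃ g₀ : E →ᵃ[ℝ] E, ∃ φ : ℕ → ℕ, StrictMono φ ∧
      (∀ x, Tendsto (fun n => g (φ n) x) atTop (𝓝 (g₀ x))) ∧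
      Tendsto (fun n => LinearMap.det (g (φ n)).linear) atTop (𝓝 (LinearMap.det g₀.linear)) := by
  obtain ⟨b, hb⟩ := hM
  obtain ⟨r, hr, hbM⟩ := nhds_basis_closedBall.mem_iff.1 (mem_interior_iff_mem_nhds.1 hb)
  obtain ⟨R, hR⟩ := hK.subset_closedBall 0
  have hgb : ∀ n, g n b ∈ closedBall 0 R := fun n => hR (hg n (hbM (mem_closedBall_self hr.le)))
  let L n : E →L[ℝ] E := (g n).linear.toContinuousLinearMap
  have hL : ∀ n, ‖L n‖ ≤ 2 * R / r := fun n => (L n).opNorm_le_div_of_norm_le hr fun v hv => by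
    have hv' : g n (v + b) ∈ closedBall 0 R :=
      hR (hg n (hbM (by simpa [dist_eq_norm] using hv)))
    have hLv : L n v = g n (v + b) - g n b := by
      show (g n).linear v = _
      simpa using (g n).linearMap_vsub (v + b) b
    rw [hLv, two_mul]
    exact (norm_sub_le _ _).trans
      (add_le_add (mem_closedBall_zero_iff.1 hv') (mem_closedBall_zero_iff.1 (hgb n)))
  obtain ⟨⟨L₀, c₀⟩, -, φ, hφ, hlim⟩ :=
    tendsto_subseq_of_bounded (x := fun n => (L n, g n b))
      (isBounded_closedBall.prod (isBounded_closedBall (x := (0 : E)) (r := R)))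
      fun n => ⟨mem_closedBall_zero_iff.2 (hL n), hgb n⟩
  have hLlim : Tendsto (fun n => L (φ n)) atTop (𝓝 L₀) := (continuous_fst.tendsto _).comp hlim
  have hclim : Tendsto (fun n => g (φ n) b) atTop (𝓝 c₀) := (continuous_snd.tendsto _).comp hlim
  let g₀ : E →ᵃ[ℝ] E :=
    { toFun := fun x => L₀ (x - b) + c₀
      linear := L₀
      map_vadd' := fun p v => by simp [vadd_eq_add, add_sub_assoc, add_assoc] }
  refine ⟨g₀, φ, hφ, fun x => ?_, (ContinuousLinearMap.continuous_det.tendsto L₀).comp hLlim⟩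
  have hgx : ∀ n, g n x = L n (x - b) + g n b := fun n => by
    rw [← sub_eq_iff_eq_add]
    exact ((g n).linearMap_vsub x b).symm
  simp only [hgx]
  exact (((ContinuousLinearMap.apply ℝ E (x - b)).continuous.tendsto L₀).comp hLlim).add hclim

end AffineMaps

section Macbeath

variable {d : ℕ}

local notation "𝔼" => EuclideanSpace ℝ (Fin d)

/-- `macbeathRho K M` is `sInf (macbeathRhoSet K M)` by definition, since `volume.real s`
unfolds to `(volume s).toReal`. -/
def macbeathRhoSet (K M : Set 𝔼) : Set ℝ :=
  {t | ∃ f : 𝔼 ≃ᵃ[ℝ] 𝔼, M ⊆ f '' K ∧ t = volume.real (f '' K) / volume.real M}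

theorem one_le_of_mem_macbeathRhoSet {K M : Set 𝔼} (hK : IsCompact K)
    (hM : (interior M).Nonempty) {t : ℝ} (ht : t ∈ macbeathRhoSet K M) : 1 ≤ t := by
  obtain ⟨f, hMf, rfl⟩ := ht
  have hfK : volume (f '' K) ≠ ⊤ := (hK.image f.continuous_of_finiteDimensional).measure_ne_top
  rw [one_le_div (show 0 < volume.real M from ENNReal.toReal_pos
    (volume.measure_pos_of_nonempty_interior hM).ne' (measure_ne_top_of_subset hMf hfK))]
  exact measureReal_mono hMf hfK

theorem macbeathRhoSet_bddBelow (K M : Set 𝔼) : BddBelow (macbeathRhoSet K M) :=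
  ⟨0, by rintro _ ⟨f, -, rfl⟩; positivity⟩

theorem macbeathRhoSet_nonempty {K M : Set 𝔼} (hK : (interior K).Nonempty)
    (hM : IsBounded M) : (macbeathRhoSet K M).Nonempty := by
  obtain ⟨a, ha⟩ := hK
  obtain ⟨ε, hε, haK⟩ := isOpen_iff.1 isOpen_interior a ha
  obtain ⟨R, hR, hMR⟩ := hM.subset_ball_lt 0 a
  -- the homothety of ratio `R / ε` about `a` blows the ball `B(a, ε) ⊆ K` up to `B(a, R) ⊇ M`
  set h := AffineEquiv.homothetyUnitsMulHom a (Units.mk0 (R / ε) (by positivity))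
  refine ⟨_, h, fun m hm => ⟨h.symm m, interior_subset (haK ?_), h.apply_symm_apply m⟩, rfl⟩
  have hm' := mem_ball.1 (hMR hm)
  rw [AffineEquiv.coe_homothetyUnitsMulHom_apply_symm, mem_ball, dist_homothety_center,
    dist_comm, Units.val_inv_eq_inv_val, Units.val_mk0, norm_inv, Real.norm_eq_abs,
    abs_of_pos (by positivity), inv_div, div_mul_eq_mul_div, div_lt_iff₀ hR]
  exact mul_lt_mul_of_pos_left hm' hε

theorem one_le_macbeathRho {K M : Set 𝔼} (hKc : IsCompact K) (hKi : (interior K).Nonempty)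
    (hMc : IsCompact M) (hMi : (interior M).Nonempty) : 1 ≤ macbeathRho K M :=
  le_csInf (macbeathRhoSet_nonempty hKi hMc.isBounded)
    fun _ => one_le_of_mem_macbeathRhoSet hKc hMi

theorem macbeathRhoSet_image_subset (K M : Set 𝔼) (f g : 𝔼 ≃ᵃ[ℝ] 𝔼) :
    macbeathRhoSet (f '' K) (g '' M) ⊆ macbeathRhoSet K M := by
  rintro t ⟨h, hsub, rfl⟩
  have himg : ⇑((f.trans h).trans g.symm) '' K = g.symm '' (h '' (f '' K)) := by
    simp [image_image]
  have hM : g.symm '' (g '' M) = M := by simp [image_image]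
  refine ⟨(f.trans h).trans g.symm, ?_, ?_⟩
  · rw [himg]
    exact fun m hm => ⟨g m, hsub ⟨m, hm, rfl⟩, g.symm_apply_apply m⟩
  · rw [himg, ← volume.addHaar_real_image_div_addHaar_real_image g.symm, hM]

theorem macbeathRho_image (K M : Set 𝔼) (f g : 𝔼 ≃ᵃ[ℝ] 𝔼) :
    macbeathRho (f '' K) (g '' M) = macbeathRho K M := by
  refine congrArg sInf ((macbeathRhoSet_image_subset K M f g).antisymm ?_)
  simpa [image_image] using macbeathRhoSet_image_subset (f '' K) (g '' M) f.symm g.symm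

theorem macbeathRho_mem_macbeathRhoSet {K M : Set 𝔼} (hKc : IsCompact K)
    (hKi : (interior K).Nonempty) (hMc : IsCompact M) (hMi : (interior M).Nonempty) :
    macbeathRho K M ∈ macbeathRhoSet K M := by
  obtain ⟨u, -, hu, hmem⟩ := exists_seq_tendsto_sInf (macbeathRhoSet_nonempty hKi hMc.isBounded)
    (macbeathRhoSet_bddBelow K M)
  choose f hMf hfu using hmem
  let g n : 𝔼 →ᵃ[ℝ] 𝔼 := (f n).symm
  have hg : ∀ n, MapsTo (g n) M K := fun n m hm => by
    obtain ⟨k, hk, rfl⟩ := hMf n hm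
    simpa [g] using hk
  obtain ⟨g₀, φ, hφ, hpt, hdet⟩ := AffineMap.exists_subseq_tendsto_of_mapsTo hMi hKc.isBounded g hg
  have hg₀ : MapsTo g₀ M K := fun m hm =>
    hKc.isClosed.mem_of_tendsto (hpt m) (Eventually.of_forall fun n => hg _ hm)
  have hgu : ∀ n, |LinearMap.det (g n).linear| * u n = volume.real K / volume.real M := by
    intro n
    rw [hfu, ← mul_div_assoc, ← volume.addHaar_real_image_affineMap]
    simp [g, image_image]
  have hg₀u : |LinearMap.det g₀.linear| * macbeathRho K M = volume.real K / volume.real M :=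
    tendsto_nhds_unique (hdet.abs.mul (hu.comp hφ.tendsto_atTop))
      (tendsto_const_nhds.congr fun n => (hgu (φ n)).symm)
  have hdet₀ : LinearMap.det g₀.linear ≠ 0 := by
    intro h
    rw [h, abs_zero, zero_mul] at hg₀u
    exact (div_pos (hKc.measureReal_pos hKi) (hMc.measureReal_pos hMi)).ne hg₀u
  let e := AffineEquiv.ofBijective (g₀.linear_bijective_iff.1
    (Module.End.isUnit_iff _ |>.1 ((LinearMap.isUnit_iff_isUnit_det _).2 hdet₀.isUnit)))
  refine ⟨e.symm, fun m hm => ⟨e m, hg₀ hm, e.symm_apply_apply m⟩, ?_⟩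
  have hK : volume.real K = |LinearMap.det g₀.linear| * volume.real (e.symm '' K) := by
    rw [← volume.addHaar_real_image_affineMap, show ⇑g₀ = e from rfl,
      image_image]
    simp
  rw [hK, mul_div_assoc] at hg₀u
  exact mul_left_cancel₀ (abs_pos.2 hdet₀).ne' hg₀u

theorem mul_mem_macbeathRhoSet {K M N : Set 𝔼} (hM : volume.real M ≠ 0) {s t : ℝ}
    (hs : s ∈ macbeathRhoSet K M) (ht : t ∈ macbeathRhoSet M N) :
    s * t ∈ macbeathRhoSet K N := by
  obtain ⟨f, hMf, rfl⟩ := hs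
  obtain ⟨g, hNg, rfl⟩ := ht
  have hgM : volume.real (g '' M) ≠ 0 := by
    rw [volume.addHaar_real_image_affineEquiv]
    exact mul_ne_zero g.abs_det_linear_pos.ne' hM
  refine ⟨f.trans g, ?_, ?_⟩
  · rw [AffineEquiv.coe_trans, image_comp]
    exact hNg.trans (image_mono hMf)
  · rw [AffineEquiv.coe_trans, image_comp,
      ← volume.addHaar_real_image_div_addHaar_real_image g (f '' K) M, div_mul_div_cancel₀ hgM]

theorem macbeathRho_le_mul {K M N : Set 𝔼} (hKc : IsCompact K) (hKi : (interior K).Nonempty)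
    (hMc : IsCompact M) (hMi : (interior M).Nonempty) (hNc : IsCompact N)
    (hNi : (interior N).Nonempty) :
    macbeathRho K N ≤ macbeathRho K M * macbeathRho M N :=
  csInf_le (macbeathRhoSet_bddBelow K N) (mul_mem_macbeathRhoSet (hMc.measureReal_pos hMi).ne'
    (macbeathRho_mem_macbeathRhoSet hKc hKi hMc hMi)
    (macbeathRho_mem_macbeathRhoSet hMc hMi hNc hNi))

theorem macbeathRho_self {K : Set 𝔼} (hKc : IsCompact K) (hKi : (interior K).Nonempty) :
    macbeathRho K K = 1 := by
  refine le_antisymm (csInf_le (macbeathRhoSet_bddBelow K K) ⟨AffineEquiv.refl ℝ 𝔼, ?_, ?_⟩)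
    (one_le_macbeathRho hKc hKi hKc hKi)
  · simp
  · simp only [AffineEquiv.coe_refl, image_id]
    exact (div_self (hKc.measureReal_pos hKi).ne').symm

theorem exists_eq_image_of_macbeathRho_eq_one {K M : Set 𝔼} (hKc : IsCompact K)
    (hKv : Convex ℝ K) (hKi : (interior K).Nonempty) (hMc : IsCompact M)
    (hMi : (interior M).Nonempty) (h : macbeathRho K M = 1) :
    ∃ f : 𝔼 ≃ᵃ[ℝ] 𝔼, M = f '' K := by
  obtain ⟨f, hMf, hf⟩ := h ▸ macbeathRho_mem_macbeathRhoSet hKc hKi hMc hMi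
  have hvol : volume.real M = volume.real (f '' K) := by
    rw [← one_mul (volume.real M)]
    exact (eq_div_iff (hMc.measureReal_pos hMi).ne').1 hf
  have hK : f.symm '' M = K := by
    refine eq_of_isClosed_of_subset_of_measureReal_eq volume
      (hMc.image f.symm.continuous_of_finiteDimensional).isClosed ?_ ?_ ?_ hKc.measure_ne_top
    · rintro _ ⟨m, hm, rfl⟩
      obtain ⟨k, hk, rfl⟩ := hMf hm
      simpa using hk
    · rw [hKv.closure_interior_eq_closure_of_nonempty_interior hKi]
      exact subset_closure
    · rw [volume.addHaar_real_image_affineEquiv, hvol, ← volume.addHaar_real_image_affineEquiv]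
      simp [preimage_image_eq K f.injective]
  refine ⟨f, ?_⟩
  rw [← hK]
  simp [image_preimage_eq M f.surjective]

theorem log_macbeathRho_le_add {K M N : Set 𝔼} (hKc : IsCompact K)
    (hKi : (interior K).Nonempty) (hMc : IsCompact M) (hMi : (interior M).Nonempty)
    (hNc : IsCompact N) (hNi : (interior N).Nonempty) :
    Real.log (macbeathRho K N) ≤ Real.log (macbeathRho K M) + Real.log (macbeathRho M N) := by
  have hKM := zero_lt_one.trans_le (one_le_macbeathRho hKc hKi hMc hMi)
  have hMN := zero_lt_one.trans_le (one_le_macbeathRho hMc hMi hNc hNi)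
  have hKN := zero_lt_one.trans_le (one_le_macbeathRho hKc hKi hNc hNi)
  rw [← Real.log_mul hKM.ne' hMN.ne']
  exact Real.log_le_log hKN (macbeathRho_le_mul hKc hKi hMc hMi hNc hNi)

theorem macbeathDist_nonneg {K M : Set 𝔼} (hKc : IsCompact K) (hKi : (interior K).Nonempty)
    (hMc : IsCompact M) (hMi : (interior M).Nonempty) : 0 ≤ macbeathDist K M :=
  add_nonneg (Real.log_nonneg (one_le_macbeathRho hKc hKi hMc hMi))
    (Real.log_nonneg (one_le_macbeathRho hMc hMi hKc hKi))

theorem macbeathRho_eq_one_of_macbeathDist_eq_zero {K M : Set 𝔼} (hKc : IsCompact K)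
    (hKi : (interior K).Nonempty) (hMc : IsCompact M) (hMi : (interior M).Nonempty)
    (h : macbeathDist K M = 0) : macbeathRho K M = 1 := by
  have hKM := one_le_macbeathRho hKc hKi hMc hMi
  have hlog : Real.log (macbeathRho K M) = 0 := by
    rw [macbeathDist] at h
    linarith [Real.log_nonneg hKM, Real.log_nonneg (one_le_macbeathRho hMc hMi hKc hKi)]
  exact le_antisymm (not_lt.1 fun h' => (Real.log_pos h').ne' hlog) hKM

theorem macbeathDist_image_self {K : Set 𝔼} (hKc : IsCompact K) (hKi : (interior K).Nonempty)
    (f : 𝔼 ≃ᵃ[ℝ] 𝔼) : macbeathDist K (f '' K) = 0 := by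
  have hKf := macbeathRho_image K K (AffineEquiv.refl ℝ 𝔼) f
  have hfK := macbeathRho_image K K f (AffineEquiv.refl ℝ 𝔼)
  simp only [AffineEquiv.coe_refl, image_id] at hKf hfK
  simp [macbeathDist, hKf, hfK, macbeathRho_self hKc hKi]

end Macbeath

theorem macbeathDist_is_metric (d : ℕ)
    (K M N : Set (EuclideanSpace ℝ (Fin d)))
    (hKc : IsCompact K) (hKv : Convex ℝ K) (hKi : (interior K).Nonempty)
    (hMc : IsCompact M) (hMi : (interior M).Nonempty)
    (hNc : IsCompact N) (hNi : (interior N).Nonempty) :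
    (∀ f g : EuclideanSpace ℝ (Fin d) ≃ᵃ[ℝ] EuclideanSpace ℝ (Fin d),
        macbeathDist (f '' K) (g '' M) = macbeathDist K M) ∧
    0 ≤ macbeathDist K M ∧
    macbeathDist K M = macbeathDist M K ∧
    (macbeathDist K M = 0 ↔
      ∃ f : EuclideanSpace ℝ (Fin d) ≃ᵃ[ℝ] EuclideanSpace ℝ (Fin d), M = f '' K) ∧
    macbeathDist K N ≤ macbeathDist K M + macbeathDist M N := by
  refine ⟨fun f g => by simp only [macbeathDist, macbeathRho_image],
    macbeathDist_nonneg hKc hKi hMc hMi, add_comm _ _, ?_, ?_⟩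
  · refine ⟨fun h => exists_eq_image_of_macbeathRho_eq_one hKc hKv hKi hMc hMi
      (macbeathRho_eq_one_of_macbeathDist_eq_zero hKc hKi hMc hMi h), ?_⟩
    rintro ⟨f, rfl⟩
    exact macbeathDist_image_self hKc hKi f
  · have hKMN := log_macbeathRho_le_add hKc hKi hMc hMi hNc hNi
    have hNMK := log_macbeathRho_le_add hNc hNi hMc hMi hKc hKi
    simp only [macbeathDist]
    linarith
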